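/- arXiv:2308.01805 — 3 statements merged into one kernel-verified Lean document; each statement's English description precedes it below -/
import Mathlib

section
/- Let c : ℤ → ℤ be finitely supported and let b ∈ ℤ satisfy c(w) = 0 for all w > b. Then for every s ∈ ℂ with Re(s) > 1 + b, the product over all prime numbers p of the finite products ∏_{w ∈ supp(c)} (1 − p^{w−s})^{−c(w)} converges (is multipliable) and equals ∏_{w ∈ supp(c)} ζ(s − w)^{c(w)}. (This is the factorization of the KU-theoretic Euler product of a finite CW-complex with torsion-free K-theory as a product of shifts of the Riemann zeta-function.) -/
/-!
Each factor is an integer power of the Euler product of `ζ` at `s - w`, which converges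
because `w ≤ b` forces `Re (s - w) > 1`; on that half-plane `ζ` does not vanish, so
negative powers pass to the limit, and a finite product of convergent products converges
to the product of the limits.
-/

open Nat (Primes)

theorem HasProd.zpow₀ {ι K : Type*} [CommGroupWithZero K] [TopologicalSpace K]
    [ContinuousMul K] [ContinuousInv₀ K] {f : ι → K} {a : K} (h : HasProd f a) (ha : a ≠ 0)
    (n : ℤ) : HasProd (fun i ↦ f i ^ n) (a ^ n) := by
  cases n with
  | ofNat m => simpa using h.pow m
  | negSucc m => simpa [zpow_negSucc] using (h.pow (m + 1)).inv₀ (pow_ne_zero _ ha)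

theorem riemannZeta_zpow_eulerProduct_hasProd {s : ℂ} (hs : 1 < s.re) (n : ℤ) :
    HasProd (fun p : Primes ↦ (1 - (p : ℂ) ^ (-s)) ^ (-n)) (riemannZeta s ^ n) := by
  simpa only [inv_zpow', neg_neg] using
    (riemannZeta_eulerProduct_hasProd hs).zpow₀ (riemannZeta_ne_zero_of_one_lt_re hs) n

/-- Factorization of the KU-theoretic Euler product of a finite CW-complex with
torsion-free K-theory (Betti data `c`) as a product of shifts of the Riemann
zeta-function, valid in the half-plane `Re s > 1 + b`. -/
theorem ku_euler_product_eq_zeta_shifts (c : ℤ →₀ ℤ) (b : ℤ)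
    (hb : ∀ w : ℤ, b < w → c w = 0) (s : ℂ) (hs : 1 + (b : ℝ) < s.re) :
    Multipliable (fun p : Nat.Primes =>
      ∏ w ∈ c.support, (1 - ((p : ℕ) : ℂ) ^ ((w : ℂ) - s)) ^ (-(c w))) ∧
    (∏' p : Nat.Primes,
        ∏ w ∈ c.support, (1 - ((p : ℕ) : ℂ) ^ ((w : ℂ) - s)) ^ (-(c w))) =
      ∏ w ∈ c.support, riemannZeta (s - (w : ℂ)) ^ (c w) := by
  have hfactor : ∀ w ∈ c.support,
      HasProd (fun p : Primes ↦ (1 - ((p : ℕ) : ℂ) ^ ((w : ℂ) - s)) ^ (-(c w)))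
        (riemannZeta (s - w) ^ c w) := by
    intro w hw
    have hwb : (w : ℝ) ≤ b := by
      exact_mod_cast not_lt.mp fun hbw ↦ Finsupp.mem_support_iff.mp hw (hb w hbw)
    have hre : 1 < (s - w).re := by
      rw [Complex.sub_re, Complex.intCast_re]
      linarith
    simpa only [neg_sub] using riemannZeta_zpow_eulerProduct_hasProd hre (c w)
  have hprod := hasProd_prod hfactor
  exact ⟨hprod.multipliable, hprod.tprod_eq⟩
end

section
/- Let c : ℤ → ℤ be finitely supported and let ζ̇_c(s) = ∏_{w ∈ supp(c)} ζ(s − w)^{c(w)}. Then for every integer m, ζ̇_c is meromorphic at m and its meromorphic order at s = m (positive values meaning a zero of that order, negative values a pole) equals −c(m−1) + Σ_{k ≥ 1} c(m + 2k), where the sum is finite because c is finitely supported. -/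
/-!
Meromorphic orders add over finite products, scale under integer powers and are invariant under
translation, so the order of `∏ w, ζ(s - w) ^ c w` at `m` is `∑ w, c w * ord_{m - w} ζ`. At the
integers, `ζ` has a simple pole at `1` (`ζ s = ζ₁ s / (s - 1)` with `ζ₁ 1 = 1`), simple zeros at
the negative even integers and no other zeros: for `re s < 0` the functional equation gives
`ζ s = sin (π s / 2) * G s` with `G` holomorphic and nonvanishing, and `ζ n ≠ 0` for `n ≥ 0`,
`n ≠ 1`. Hence `w = m - 1` contributes `-c (m - 1)` and each `w = m + 2k`, `k ≥ 1`, contributes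
`c w`.
-/

open Complex Filter Topology
open scoped Real

noncomputable def riemannZetaReflectionFactor (s : ℂ) : ℂ :=
  2 * (2 * π) ^ (s - 1) * Gamma (1 - s) * riemannZeta (1 - s)

lemma one_sub_ne_neg_natCast_of_re_neg {s : ℂ} (hs : s.re < 0) (m : ℕ) : 1 - s ≠ -m := by
  intro h
  have := congrArg re h
  simp only [sub_re, one_re, neg_re, natCast_re] at this
  linarith [(m.cast_nonneg : (0 : ℝ) ≤ m)]

lemma riemannZeta_eq_sin_mul_riemannZetaReflectionFactor {s : ℂ} (hs : s.re < 0) :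
    riemannZeta s = sin (π / 2 * s) * riemannZetaReflectionFactor s := by
  have h1 : 1 - s ≠ 1 := fun h => by simp [sub_eq_self.1 h] at hs
  rw [← sub_sub_cancel 1 s, riemannZeta_one_sub (one_sub_ne_neg_natCast_of_re_neg hs) h1,
    sub_sub_cancel, riemannZetaReflectionFactor, show π * (1 - s) / 2 = π / 2 - π / 2 * s by ring,
    cos_pi_div_two_sub, neg_sub]
  ring

lemma riemannZetaReflectionFactor_ne_zero {s : ℂ} (hs : s.re < 0) :
    riemannZetaReflectionFactor s ≠ 0 := by
  have hζ : riemannZeta (1 - s) ≠ 0 :=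
    riemannZeta_ne_zero_of_one_le_re (by simp only [sub_re, one_re]; linarith)
  have h2π : (2 * π : ℂ) ≠ 0 := by simp [Real.pi_ne_zero]
  unfold riemannZetaReflectionFactor
  exact mul_ne_zero (mul_ne_zero (mul_ne_zero two_ne_zero (cpow_ne_zero_iff.2 (.inl h2π)))
    (Gamma_ne_zero (one_sub_ne_neg_natCast_of_re_neg hs))) hζ

lemma differentiableAt_riemannZetaReflectionFactor {s : ℂ} (hs : s.re < 0) :
    DifferentiableAt ℂ riemannZetaReflectionFactor s := by
  have h1 : 1 - s ≠ 1 := fun h => by simp [sub_eq_self.1 h] at hs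
  have h2π : (2 * π : ℂ) ≠ 0 := by simp [Real.pi_ne_zero]
  have hΓ : DifferentiableAt ℂ (fun z : ℂ => Gamma (1 - z)) s :=
    (differentiableAt_Gamma _ (one_sub_ne_neg_natCast_of_re_neg hs)).comp s (by fun_prop)
  have hζ : DifferentiableAt ℂ (fun z : ℂ => riemannZeta (1 - z)) s :=
    (differentiableAt_riemannZeta h1).comp s (by fun_prop)
  have hpow : DifferentiableAt ℂ (fun z : ℂ => (2 * π : ℂ) ^ (z - 1)) s :=
    .const_cpow (by fun_prop) (.inl h2π)
  exact ((hpow.const_mul 2).mul hΓ).mul hζ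

lemma analyticAt_riemannZetaReflectionFactor {s : ℂ} (hs : s.re < 0) :
    AnalyticAt ℂ riemannZetaReflectionFactor s :=
  DifferentiableOn.analyticAt (s := {z | z.re < 0})
    (fun _ hz => (differentiableAt_riemannZetaReflectionFactor hz).differentiableWithinAt)
    ((isOpen_lt continuous_re continuous_const).mem_nhds hs)

lemma sin_pi_div_two_mul_intCast_eq_zero_iff (n : ℤ) : sin (π / 2 * n) = 0 ↔ Even n := by
  have hπ : (π : ℂ) ≠ 0 := by simp [Real.pi_ne_zero]
  rw [sin_eq_zero_iff, even_iff_exists_two_mul]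
  refine exists_congr fun k => ?_
  rw [← Int.cast_inj (α := ℂ)]
  push_cast
  constructor <;> intro h
  · exact mul_left_cancel₀ hπ (by linear_combination 2 * h)
  · linear_combination π / 2 * h

lemma analyticOrderAt_sin_pi_div_two_mul_intCast (n : ℤ) :
    analyticOrderAt (fun s : ℂ => sin (π / 2 * s)) n = if Even n then 1 else 0 := by
  have hA : AnalyticAt ℂ (fun s : ℂ => sin (π / 2 * s)) n := by fun_prop
  split_ifs with hn
  · have hsin : sin (π / 2 * n) = 0 := (sin_pi_div_two_mul_intCast_eq_zero_iff n).2 hn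
    -- `sin² + cos² = 1`, so the derivative `π / 2 * cos (π / 2 * n)` cannot vanish as well
    have hcos : cos (π / 2 * n) ≠ 0 := fun h => by
      simpa [hsin, h] using sin_sq_add_cos_sq (π / 2 * (n : ℂ))
    have hlin : HasDerivAt (fun s : ℂ => π / 2 * s) (π / 2 : ℂ) n := by
      simpa using (hasDerivAt_id (n : ℂ)).const_mul (π / 2 : ℂ)
    refine hA.analyticOrderAt_eq_one_of_zero_deriv_ne_zero hsin ?_
    rw [hlin.csin.deriv]
    simpa [Real.pi_ne_zero] using hcos
  · exact hA.analyticOrderAt_eq_zero.2 ((sin_pi_div_two_mul_intCast_eq_zero_iff n).not.2 hn)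

lemma analyticOrderAt_riemannZeta_intCast_of_neg {n : ℤ} (hn : n < 0) :
    analyticOrderAt riemannZeta n = if Even n then 1 else 0 := by
  have hre : (n : ℂ).re < 0 := by simpa using hn
  have hG := analyticAt_riemannZetaReflectionFactor hre
  have hζ : riemannZeta =ᶠ[𝓝 (n : ℂ)]
      (fun s => sin (π / 2 * s)) * riemannZetaReflectionFactor := by
    filter_upwards [(isOpen_lt continuous_re continuous_const).mem_nhds hre] with s hs
    exact riemannZeta_eq_sin_mul_riemannZetaReflectionFactor hs
  rw [analyticOrderAt_congr hζ, analyticOrderAt_mul (by fun_prop) hG,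
    hG.analyticOrderAt_eq_zero.2 (riemannZetaReflectionFactor_ne_zero hre), add_zero,
    analyticOrderAt_sin_pi_div_two_mul_intCast]

lemma riemannZeta_intCast_ne_zero_of_nonneg {n : ℤ} (h0 : 0 ≤ n) (h1 : n ≠ 1) :
    riemannZeta n ≠ 0 := by
  obtain rfl | hpos := h0.eq_or_lt
  · simp [riemannZeta_zero]
  · have hre : (1 : ℝ) ≤ n := by exact_mod_cast hpos
    exact riemannZeta_ne_zero_of_one_le_re (by simpa using hre)

lemma riemannZeta_eventuallyEq_zpow_smul_riemannZeta₁ :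
    riemannZeta =ᶠ[𝓝[≠] 1] fun s => (s - 1) ^ (-1 : ℤ) • riemannZeta₁ s := by
  filter_upwards [self_mem_nhdsWithin] with s hs
  rw [riemannZeta_eq_inv_sub_mul hs, zpow_neg_one, smul_eq_mul]

lemma meromorphicAt_riemannZeta (s : ℂ) : MeromorphicAt riemannZeta s := by
  rcases eq_or_ne s 1 with rfl | hs
  · exact MeromorphicAt.iff_eventuallyEq_zpow_smul_analyticAt.2
      ⟨-1, _, differentiable_riemannZeta₁.analyticAt 1,
        riemannZeta_eventuallyEq_zpow_smul_riemannZeta₁⟩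
  · exact (analyticOn_riemannZeta s hs).meromorphicAt

lemma meromorphicOrderAt_riemannZeta_one : meromorphicOrderAt riemannZeta 1 = (-1 : ℤ) :=
  (meromorphicOrderAt_eq_int_iff (meromorphicAt_riemannZeta 1)).2
    ⟨_, differentiable_riemannZeta₁.analyticAt 1, by simp [riemannZeta₁_one],
      riemannZeta_eventuallyEq_zpow_smul_riemannZeta₁⟩

def riemannZetaOrderAtInt (n : ℤ) : ℤ :=
  if n = 1 then -1 else if n < 0 ∧ Even n then 1 else 0

lemma meromorphicOrderAt_riemannZeta_intCast (n : ℤ) :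
    meromorphicOrderAt riemannZeta n = riemannZetaOrderAtInt n := by
  rcases eq_or_ne n 1 with rfl | h1
  · simpa [riemannZetaOrderAtInt] using meromorphicOrderAt_riemannZeta_one
  have hA : AnalyticAt ℂ riemannZeta n := analyticOn_riemannZeta n (by simpa using h1)
  rw [hA.meromorphicOrderAt_eq, riemannZetaOrderAtInt, if_neg h1]
  rcases lt_or_ge n 0 with hn | hn
  · rw [analyticOrderAt_riemannZeta_intCast_of_neg hn]
    split_ifs <;> simp_all
  · rw [hA.analyticOrderAt_eq_zero.2 (riemannZeta_intCast_ne_zero_of_nonneg hn h1),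
      if_neg (by omega)]
    rfl

lemma mem_range_add_two_mul_succ_iff {m w : ℤ} :
    w ∈ Set.range (fun k : ℕ => m + 2 * ((k : ℤ) + 1)) ↔ m - w < 0 ∧ Even (m - w) := by
  simp only [Set.mem_range]
  constructor
  · rintro ⟨k, rfl⟩
    exact ⟨by omega, ⟨-((k : ℤ) + 1), by ring⟩⟩
  · rintro ⟨hneg, t, ht⟩
    exact ⟨(-t - 1).toNat, by omega⟩

lemma sum_mul_riemannZetaOrderAtInt_sub (c : ℤ →₀ ℤ) (m : ℤ) :
    ∑ w ∈ c.support, c w * riemannZetaOrderAtInt (m - w) =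
      -c (m - 1) + ∑ᶠ k : ℕ, c (m + 2 * ((k : ℤ) + 1)) := by
  classical
  set S := Set.range (fun k : ℕ => m + 2 * ((k : ℤ) + 1))
  have hterm : ∀ w, c w * riemannZetaOrderAtInt (m - w) =
      -(if w = m - 1 then c w else 0) + S.indicator c w := by
    intro w
    rw [Set.indicator_apply, mem_range_add_two_mul_succ_iff, riemannZetaOrderAtInt]
    split_ifs <;> omega
  have hpole : ∑ w ∈ c.support, (if w = m - 1 then c w else 0) = c (m - 1) :=
    Finsupp.sum_ite_self_eq' c (m - 1)
  have hzeros : ∑ w ∈ c.support, S.indicator c w = ∑ᶠ k : ℕ, c (m + 2 * ((k : ℤ) + 1)) := by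
    rw [← finsum_eq_sum_of_support_subset (S.indicator c)
        fun w hw => Finsupp.mem_support_iff.2 (Set.indicator_apply_ne_zero.1 hw).2,
      ← finsum_mem_def, finsum_mem_range (by intro a b h; simpa using h)]
  simp only [hterm, Finset.sum_add_distrib, Finset.sum_neg_distrib, hpole, hzeros]

/-- The meromorphic order of the provisional KU-local zeta-function
`s ↦ ∏ w, ζ(s - w) ^ c w` at an integer point `m` equals
`-c (m - 1) + ∑_{k ≥ 1} c (m + 2k)` (positive order = zero, negative = pole). -/
theorem provisional_ku_zeta_order_at_int (c : ℤ →₀ ℤ) (m : ℤ) :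
    ∃ h : MeromorphicAt
        (fun s : ℂ => ∏ w ∈ c.support, riemannZeta (s - (w : ℂ)) ^ (c w)) (m : ℂ),
      meromorphicOrderAt
          (fun s : ℂ => ∏ w ∈ c.support, riemannZeta (s - (w : ℂ)) ^ (c w)) (m : ℂ) =
        ((-c (m - 1) + ∑ᶠ k : ℕ, c (m + 2 * ((k : ℤ) + 1)) : ℤ) : WithTop ℤ) := by
  have hζ : ∀ w : ℤ, MeromorphicAt (fun s : ℂ => riemannZeta (s - w)) m := fun w =>
    meromorphicAt_fun_comp_sub_const_iff_meromorphicAt.2 (meromorphicAt_riemannZeta _)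
  have hfactor : ∀ w ∈ c.support, MeromorphicAt (fun s : ℂ => riemannZeta (s - w) ^ c w) m :=
    fun w _ => (hζ w).zpow (c w)
  refine ⟨.fun_prod hfactor, ?_⟩
  rw [meromorphicOrderAt_fun_prod hfactor, ← sum_mul_riemannZetaOrderAtInt_sub, WithTop.coe_sum]
  refine Finset.sum_congr rfl fun w _ => ?_
  refine (meromorphicOrderAt_zpow (hζ w)).trans ?_
  rw [meromorphicOrderAt_fun_comp_sub_const_eq_meromorphicOrderAt, ← Int.cast_sub,
    meromorphicOrderAt_riemannZeta_intCast]
  rfl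
end

section
/- Let ℓ be an odd prime, w an integer, and s ∈ ℂ with Re(s) > 1 + w. For each prime p ≠ ℓ choose a natural number m_p whose residue class in ℤ/ℓℤ equals that of p^w (computed in the unit group (ℤ/ℓℤ)^× when w < 0). Then the family indexed by the primes p ≠ ℓ whose p-th term is ∏_{χ ∈ S_ℓ} (1 − χ(p)^{m_p} · p^{w−s})^{−1} is multipliable, and its product equals ∏_{χ ∈ S_ℓ} L(s − w, χ). In particular the Euler product is independent of the choice of the exponents m_p. (This is the prime-order case of the identification of the torsion KU-local L-function, with Adams-operation twist p ↦ p^w, as a product of Dirichlet L-functions.) -/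
/-!
Since `p ≠ ℓ`, the exponent `m p ≡ p ^ w` is prime to `ℓ`, so `χ ↦ χ ^ m p` permutes the
characters of order `ℓ`, and `χ p ^ m p = (χ ^ m p) p`. Hence the `p`-th factor is
`∏_χ (1 - χ p * p ^ (w - s))⁻¹`, whatever `m p` is, and the claim is the product over `χ` of the
Euler products of `L(χ, s - w)`, whose factor at `ℓ` is `1` because `χ ℓ = 0`.
-/

theorem finprod_mem_setOf_orderOf_eq_comp_pow {M N : Type*} [Monoid M] [CommMonoid N]
    {k n : ℕ} (hn : n.Coprime k) (f : M → N) :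
    ∏ᶠ x ∈ {x : M | orderOf x = k}, f (x ^ n) = ∏ᶠ x ∈ {x : M | orderOf x = k}, f x := by
  obtain ⟨n', hn'⟩ : ∃ n', n * n' ≡ 1 [MOD k] := by
    rcases eq_or_ne k 0 with rfl | hk
    · exact ⟨1, by rw [(Nat.coprime_zero_right n).mp hn]⟩
    · obtain ⟨n', -, h⟩ := Nat.exists_mul_mod_eq_of_coprime 1 hn hk
      exact ⟨n', h⟩
  have hn'k : n'.Coprime k := Nat.Coprime.coprime_mul_left (hn'.gcd_eq.trans (Nat.gcd_one_left k))
  have pow_pow_cancel {x : M} (hx : orderOf x = k) {a b : ℕ} (hab : a * b ≡ 1 [MOD k]) :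
      (x ^ a) ^ b = x := by
    rw [← pow_mul, ← pow_mod_orderOf, hx, hab, ← hx, pow_mod_orderOf, pow_one]
  have maps_to {e : ℕ} (he : e.Coprime k) :
      Set.MapsTo (· ^ e) {x : M | orderOf x = k} {x : M | orderOf x = k} := fun x hx => by
    simp only [Set.mem_ofPred_eq] at hx ⊢
    rw [Nat.Coprime.orderOf_pow (hx ▸ he.symm), hx]
  refine finprod_mem_eq_of_bijOn (· ^ n) (Set.InvOn.bijOn (f' := (· ^ n')) ⟨?_, ?_⟩
    (maps_to hn) (maps_to hn'k)) fun _ _ => rfl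
  · exact fun x hx => pow_pow_cancel hx hn'
  · exact fun x hx => pow_pow_cancel hx (by rwa [mul_comm])

theorem ZMod.coprime_of_natCast_eq_zpow {ℓ : ℕ} [Fact ℓ.Prime] {a b : ℕ} (hb : b.Coprime ℓ)
    {w : ℤ} (h : (a : ZMod ℓ) = (b : ZMod ℓ) ^ w) : a.Coprime ℓ := by
  have hb0 : (b : ZMod ℓ) ≠ 0 := isUnit_iff_ne_zero.mp ((ZMod.isUnit_iff_coprime b ℓ).mpr hb)
  exact (ZMod.isUnit_iff_coprime a ℓ).mp (isUnit_iff_ne_zero.mpr (h ▸ zpow_ne_zero w hb0))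

theorem DirichletCharacter.hasProd_LFunction_subtype_primes {N : ℕ} [NeZero N]
    (χ : DirichletCharacter ℂ N) {s : ℂ} (hs : 1 < s.re) {P : Nat.Primes → Prop}
    (hP : ∀ p : Nat.Primes, ¬ P p → (p : ℕ) ∣ N) :
    HasProd (fun p : {p // P p} => (1 - χ ((p.1 : ℕ) : ZMod N) * ((p.1 : ℕ) : ℂ) ^ (-s))⁻¹)
      (χ.LFunction s) := by
  rw [LFunction_eq_LSeries χ hs]
  refine (Subtype.val_injective.hasProd_iff fun p hp => ?_).mpr
    (LSeries_eulerProduct_hasProd χ hs)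
  have hp_dvd : (p : ℕ) ∣ N := hP p fun h => hp ⟨⟨p, h⟩, rfl⟩
  have hp_nonunit : ¬ IsUnit ((p : ℕ) : ZMod N) := fun hu =>
    p.prop.ne_one (((ZMod.isUnit_iff_coprime p N).mp hu).eq_one_of_dvd hp_dvd)
  simp [χ.map_nonunit hp_nonunit]

theorem hasProd_finprod_mem {ι β M : Type*} [CommMonoid M] [TopologicalSpace M]
    [ContinuousMul M] {S : Set ι} (hS : S.Finite) {f : ι → β → M} {a : ι → M}
    (hf : ∀ i ∈ S, HasProd (f i) (a i)) :
    HasProd (fun b => ∏ᶠ i ∈ S, f i b) (∏ᶠ i ∈ S, a i) := by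
  simp only [finprod_mem_eq_finite_toFinset_prod _ hS]
  exact hasProd_prod fun i hi => hf i (hS.mem_toFinset.mp hi)

theorem torsion_ku_L_euler_product_general (ℓ : ℕ) [Fact ℓ.Prime]
    (w : ℤ) (s : ℂ) (hs : 1 + (w : ℝ) < s.re) (m : Nat.Primes → ℕ)
    (hm : ∀ p : Nat.Primes, (p : ℕ) ≠ ℓ →
      ((m p : ZMod ℓ)) = (((p : ℕ) : ZMod ℓ)) ^ w) :
    Multipliable (fun p : {p : Nat.Primes // (p : ℕ) ≠ ℓ} =>
      ∏ᶠ χ ∈ {χ : DirichletCharacter ℂ (ℓ ^ 2) | orderOf χ = ℓ},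
        (1 - χ (((p.1 : ℕ) : ZMod (ℓ ^ 2))) ^ (m p.1) *
            ((p.1 : ℕ) : ℂ) ^ ((w : ℂ) - s))⁻¹) ∧
    (∏' p : {p : Nat.Primes // (p : ℕ) ≠ ℓ},
        ∏ᶠ χ ∈ {χ : DirichletCharacter ℂ (ℓ ^ 2) | orderOf χ = ℓ},
          (1 - χ (((p.1 : ℕ) : ZMod (ℓ ^ 2))) ^ (m p.1) *
              ((p.1 : ℕ) : ℂ) ^ ((w : ℂ) - s))⁻¹) =
      ∏ᶠ χ ∈ {χ : DirichletCharacter ℂ (ℓ ^ 2) | orderOf χ = ℓ},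
        DirichletCharacter.LFunction χ (s - (w : ℂ)) := by
  have hℓ : ℓ.Prime := Fact.out
  have hs' : 1 < (s - w).re := by simp only [Complex.sub_re, Complex.intCast_re]; linarith
  have untwist (p : {p : Nat.Primes // (p : ℕ) ≠ ℓ}) :
      ∏ᶠ χ ∈ {χ : DirichletCharacter ℂ (ℓ ^ 2) | orderOf χ = ℓ},
        (1 - χ (((p.1 : ℕ) : ZMod (ℓ ^ 2))) ^ (m p.1) * ((p.1 : ℕ) : ℂ) ^ ((w : ℂ) - s))⁻¹ =
      ∏ᶠ χ ∈ {χ : DirichletCharacter ℂ (ℓ ^ 2) | orderOf χ = ℓ},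
        (1 - χ (((p.1 : ℕ) : ZMod (ℓ ^ 2))) * ((p.1 : ℕ) : ℂ) ^ (-(s - w)))⁻¹ := by
    have hcop : (m p.1).Coprime ℓ :=
      ZMod.coprime_of_natCast_eq_zpow ((Nat.coprime_primes p.1.prop hℓ).mpr p.2) (hm p.1 p.2)
    have hm0 : m p.1 ≠ 0 := fun h => hℓ.ne_one (Nat.coprime_zero_left ℓ |>.mp (h ▸ hcop))
    have h := finprod_mem_setOf_orderOf_eq_comp_pow hcop fun χ : DirichletCharacter ℂ (ℓ ^ 2) =>
      (1 - χ (((p.1 : ℕ) : ZMod (ℓ ^ 2))) * ((p.1 : ℕ) : ℂ) ^ (-(s - w)))⁻¹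
    simpa only [MulChar.pow_apply' _ hm0, neg_sub] using h
  have hprod := hasProd_finprod_mem
    (Set.toFinite {χ : DirichletCharacter ℂ (ℓ ^ 2) | orderOf χ = ℓ}) fun χ _ =>
      χ.hasProd_LFunction_subtype_primes hs' (P := fun p => (p : ℕ) ≠ ℓ) fun p hp =>
        by rw [not_ne_iff.mp hp]; exact dvd_pow_self ℓ two_ne_zero
  simp only [← untwist] at hprod
  exact ⟨hprod.multipliable, hprod.tprod_eq⟩

/-- Prime-order case of the identification of the torsion KU-local L-function as a
product of Dirichlet L-functions.  For an odd prime `ℓ`, weight `w`, and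
`Re s > 1 + w`: given, for each prime `p ≠ ℓ`, a natural number `m p` congruent to
`p ^ w` modulo `ℓ`, the Euler product over primes `p ≠ ℓ` of
`∏_{χ of order ℓ mod ℓ²} (1 - χ(p)^{m p} p^{w - s})⁻¹` is multipliable and equals
`∏_{χ of order ℓ mod ℓ²} L(s - w, χ)`. -/
theorem torsion_ku_L_euler_product (ℓ : ℕ) [Fact ℓ.Prime] (hodd : Odd ℓ)
    (w : ℤ) (s : ℂ) (hs : 1 + (w : ℝ) < s.re) (m : Nat.Primes → ℕ)
    (hm : ∀ p : Nat.Primes, (p : ℕ) ≠ ℓ →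
      ((m p : ZMod ℓ)) = (((p : ℕ) : ZMod ℓ)) ^ w) :
    Multipliable (fun p : {p : Nat.Primes // (p : ℕ) ≠ ℓ} =>
      ∏ᶠ χ ∈ {χ : DirichletCharacter ℂ (ℓ ^ 2) | orderOf χ = ℓ},
        (1 - χ (((p.1 : ℕ) : ZMod (ℓ ^ 2))) ^ (m p.1) *
            ((p.1 : ℕ) : ℂ) ^ ((w : ℂ) - s))⁻¹) ∧
    (∏' p : {p : Nat.Primes // (p : ℕ) ≠ ℓ},
        ∏ᶠ χ ∈ {χ : DirichletCharacter ℂ (ℓ ^ 2) | orderOf χ = ℓ},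
          (1 - χ (((p.1 : ℕ) : ZMod (ℓ ^ 2))) ^ (m p.1) *
              ((p.1 : ℕ) : ℂ) ^ ((w : ℂ) - s))⁻¹) =
      ∏ᶠ χ ∈ {χ : DirichletCharacter ℂ (ℓ ^ 2) | orderOf χ = ℓ},
        DirichletCharacter.LFunction χ (s - (w : ℂ)) :=
  torsion_ku_L_euler_product_general ℓ w s hs m hm
end
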